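/- arXiv:0906.3529 — 8 statements merged into one kernel-verified Lean document; each statement's English description precedes it below -/
import Mathlib

section
/- Let K_1, …, K_d be linearly independent real symmetric m×m matrices such that some real linear combination ∑_j λ_j K_j is positive definite. Then for every t ∈ ℝ^d the following are equivalent: (i) there exists a positive definite real symmetric m×m matrix S with trace(S·K_j) = t_j for all j = 1,…,d; (ii) for every nonzero λ ∈ ℝ^d such that ∑_j λ_j K_j is positive semidefinite, one has ∑_j t_j λ_j > 0. (This is the duality between the cone of sufficient statistics and the cone of concentration matrices: C_L is the dual cone of K_L.) -/
/-!
For `S` positive definite and `M ≠ 0` positive semidefinite, `trace (S * M) > 0`; since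
`∑ tⱼ λⱼ = trace (S * ∑ λⱼ Kⱼ)` when `t = π S`, this gives (i) ⇒ (ii).

Conversely, linear independence of the `Kⱼ` makes `π` surjective, hence open, so the image under
`π` of the open convex cone of matrices with positive quadratic form is open and convex. If `t`
were outside it, Hahn–Banach would give `μ` with `trace (A * ∑ μⱼ Kⱼ) < ∑ tⱼ μⱼ` for every
positive definite `A`. Testing with `A = 1 + s • x xᵀ` and `A = s • 1` for all `s > 0` shows that
`-∑ μⱼ Kⱼ` is positive semidefinite and `∑ tⱼ μⱼ ≥ 0`, contradicting (ii) at `λ = -μ`. Finally the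
symmetric part of a matrix with positive quadratic form is positive definite and, the `Kⱼ` being
symmetric, has the same image under `π`.
-/

open Matrix

theorem nonpos_of_forall_pos_add_mul_lt {a b c : ℝ} (h : ∀ s : ℝ, 0 < s → a + s * b < c) :
    b ≤ 0 := by
  by_contra! hb
  have := h ((|c - a| + 1) / b) (by positivity)
  rw [div_mul_cancel₀ _ hb.ne'] at this
  linarith [le_abs_self (c - a)]

theorem nonneg_of_forall_pos_mul_lt {a c : ℝ} (h : ∀ s : ℝ, 0 < s → s * a < c) : 0 ≤ c := by
  by_contra! hc
  rcases le_or_gt 0 a with ha | ha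
  · linarith [h 1 one_pos]
  · have := h (c / (2 * a)) (div_pos_of_neg_of_neg hc (by linarith))
    rw [div_mul_eq_mul_div, mul_div_mul_right _ _ ha.ne] at this
    linarith

namespace Matrix

variable {n : Type*} [Fintype n]

theorem PosDef.trace_mul_pos {S M : Matrix n n ℝ} (hS : S.PosDef) (hM : M.PosSemidef)
    (hM0 : M ≠ 0) : 0 < (S * M).trace := by
  classical
  open MatrixOrder in
  obtain ⟨C, hC, rfl⟩ :=
    CStarAlgebra.isStrictlyPositive_iff_eq_star_mul_self.mp hS.isStrictlyPositive
  have hCMC : (C * M * Cᴴ).PosSemidef := hM.mul_mul_conjTranspose_same C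
  have htrace : (star C * C * M).trace = (C * M * Cᴴ).trace := by
    rw [star_eq_conjTranspose, Matrix.mul_assoc, trace_mul_comm]
  rw [htrace]
  refine hCMC.trace_nonneg.lt_of_ne' fun h => hM0 ?_
  have hCMC0 := hCMC.trace_eq_zero_iff.mp h
  rwa [← star_eq_conjTranspose, hC.star.mul_left_eq_zero, hC.mul_right_eq_zero] at hCMC0

theorem posSemidef_neg_of_forall_trace_mul_lt [DecidableEq n] {M : Matrix n n ℝ} (hM : M.IsSymm)
    {c : ℝ} (h : ∀ A : Matrix n n ℝ, A.PosDef → (A * M).trace < c) : (-M).PosSemidef := by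
  refine .of_dotProduct_mulVec_nonneg (isHermitian_iff_isSymm.mpr hM.neg) fun x => ?_
  have hx : x ⬝ᵥ M *ᵥ x ≤ 0 := nonpos_of_forall_pos_add_mul_lt fun s hs => by
    have hA : (1 + s • vecMulVec x x).PosDef :=
      PosDef.one.add_posSemidef ((posSemidef_vecMulVec_self_star x).smul hs.le)
    have htr : (vecMulVec x x * M).trace = x ⬝ᵥ M *ᵥ x := by
      rw [vecMulVec_mul, trace_vecMulVec, dotProduct_comm, dotProduct_mulVec]
    simpa [add_mul, trace_add, trace_smul, htr] using h _ hA
  rwa [star_trivial, neg_mulVec, dotProduct_neg, neg_nonneg]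

-- Unlike `PosDef`, no symmetry is required, which makes the set of such matrices open.
def PosQuad (A : Matrix n n ℝ) : Prop :=
  ∀ x, x ≠ 0 → 0 < x ⬝ᵥ A *ᵥ x

theorem PosDef.posQuad {A : Matrix n n ℝ} (hA : A.PosDef) : A.PosQuad := fun x hx => by
  simpa using hA.dotProduct_mulVec_pos hx

theorem PosQuad.posDef_add_transpose {A : Matrix n n ℝ} (hA : A.PosQuad) : (A + Aᵀ).PosDef := by
  refine .of_dotProduct_mulVec_pos ?_ fun x hx => ?_
  · simp [IsHermitian, add_comm]
  · have hT : x ⬝ᵥ Aᵀ *ᵥ x = x ⬝ᵥ A *ᵥ x := by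
      rw [mulVec_transpose, dotProduct_comm, dotProduct_mulVec]
    rw [star_trivial, add_mulVec, dotProduct_add, hT]
    exact add_pos (hA x hx) (hA x hx)

theorem convex_setOf_posQuad : Convex ℝ {A : Matrix n n ℝ | A.PosQuad} := by
  intro A hA B hB a b ha hb hab x hx
  rw [add_mulVec, dotProduct_add, smul_mulVec, smul_mulVec, dotProduct_smul, dotProduct_smul,
    smul_eq_mul, smul_eq_mul]
  rcases ha.eq_or_lt with rfl | ha
  · obtain rfl : b = 1 := by simpa using hab
    simpa using hB x hx
  · exact add_pos_of_pos_of_nonneg (mul_pos ha (hA x hx)) (mul_nonneg hb (hB x hx).le)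

theorem isOpen_setOf_posQuad : IsOpen {A : Matrix n n ℝ | A.PosQuad} := by
  have hsphere : {A : Matrix n n ℝ | A.PosQuad} =
      {A | ∀ x ∈ Metric.sphere (0 : n → ℝ) 1, 0 < x ⬝ᵥ A *ᵥ x} := by
    ext A
    refine ⟨fun h x hx => h x (ne_zero_of_mem_unit_sphere ⟨x, hx⟩), fun h x hx => ?_⟩
    have hx' : 0 < ‖x‖ := norm_pos_iff.mpr hx
    have := h (‖x‖⁻¹ • x) (by simp [norm_smul, hx'.ne'])
    rw [mulVec_smul, dotProduct_smul, smul_dotProduct, smul_eq_mul, smul_eq_mul] at this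
    exact pos_of_mul_pos_right (pos_of_mul_pos_right this (by positivity)) (by positivity)
  rw [hsphere, isOpen_iff_eventually]
  intro A hA
  have hcont : Continuous fun p : Matrix n n ℝ × (n → ℝ) => p.2 ⬝ᵥ p.1 *ᵥ p.2 := by fun_prop
  exact (isCompact_sphere 0 1).eventually_forall_of_forall_eventually fun x hx =>
    hcont.continuousAt.eventually (lt_mem_nhds (hA x hx))

end Matrix

section SufficientStatistics

variable {n ι : Type*} [Fintype n]

-- The map `π_L`.
def sufficientStatMap (K : ι → Matrix n n ℝ) : Matrix n n ℝ →ₗ[ℝ] ι → ℝ :=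
  LinearMap.pi fun j => (traceLinearMap n ℝ ℝ).comp (LinearMap.mulRight ℝ (K j))

@[simp]
theorem sufficientStatMap_apply (K : ι → Matrix n n ℝ) (A : Matrix n n ℝ) (j : ι) :
    sufficientStatMap K A j = (A * K j).trace :=
  rfl

theorem sufficientStatMap_dotProduct [Fintype ι] (K : ι → Matrix n n ℝ) (A : Matrix n n ℝ)
    (l : ι → ℝ) :
    sufficientStatMap K A ⬝ᵥ l = (A * ∑ j, l j • K j).trace := by
  simp only [dotProduct, sufficientStatMap_apply, Finset.mul_sum, mul_smul_comm, trace_sum,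
    trace_smul, smul_eq_mul, mul_comm]

theorem sufficientStatMap_surjective [Fintype ι] {K : ι → Matrix n n ℝ}
    (hK : LinearIndependent ℝ K) :
    Function.Surjective (sufficientStatMap K) := by
  classical
  rw [← LinearMap.dualMap_injective_iff, injective_iff_map_eq_zero]
  intro φ hφ
  set l : ι → ℝ := fun i => φ fun j => if i = j then 1 else 0
  have hφl : ∀ u, φ u = u ⬝ᵥ l := fun u => φ.pi_apply_eq_sum_univ u
  have hsum : ∑ j, l j • K j = 0 := ext_iff_trace_mul_left.mpr fun A => by
    rw [← sufficientStatMap_dotProduct, ← hφl, Matrix.mul_zero, trace_zero]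
    exact LinearMap.congr_fun hφ A
  have hl : l = 0 := funext (Fintype.linearIndependent_iff.mp hK l hsum)
  ext u
  simp [hφl, hl]

theorem sufficientStatMap_transpose {K : ι → Matrix n n ℝ} (hK : ∀ j, (K j).IsSymm)
    (A : Matrix n n ℝ) : sufficientStatMap K Aᵀ = sufficientStatMap K A := by
  ext j
  rw [sufficientStatMap_apply, ← trace_transpose, transpose_mul, transpose_transpose, (hK j).eq,
    trace_mul_comm, sufficientStatMap_apply]

theorem mem_image_posQuad_of_forall_posSemidef [Fintype ι] {K : ι → Matrix n n ℝ}
    (hK : ∀ j, (K j).IsSymm) (hindep : LinearIndependent ℝ K) {t : ι → ℝ}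
    (h : ∀ l : ι → ℝ, l ≠ 0 → (∑ j, l j • K j).PosSemidef → 0 < t ⬝ᵥ l) :
    t ∈ sufficientStatMap K '' {A | A.PosQuad} := by
  classical
  by_contra ht
  obtain ⟨f, hf⟩ := geometric_hahn_banach_open_point
    (convex_setOf_posQuad.linear_image _)
    (LinearMap.isOpenMap_of_finiteDimensional _ (sufficientStatMap_surjective hindep) _
      isOpen_setOf_posQuad) ht
  set μ : ι → ℝ := fun i => f fun j => if i = j then 1 else 0
  have hfμ : ∀ u, f u = u ⬝ᵥ μ := fun u => (f : (ι → ℝ) →ₗ[ℝ] ℝ).pi_apply_eq_sum_univ u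
  have hlt : ∀ A : Matrix n n ℝ, A.PosDef → (A * ∑ j, μ j • K j).trace < t ⬝ᵥ μ := by
    intro A hA
    rw [← sufficientStatMap_dotProduct, ← hfμ, ← hfμ]
    exact hf _ ⟨A, hA.posQuad, rfl⟩
  have hμ : μ ≠ 0 := by
    rintro hμ
    simpa [hμ] using hlt 1 PosDef.one
  have ht : 0 ≤ t ⬝ᵥ μ := nonneg_of_forall_pos_mul_lt fun s hs => by
    simpa [trace_smul] using hlt (s • 1) (PosDef.one.smul hs)
  have hsymm : (∑ j, μ j • K j).IsSymm := by
    simp only [IsSymm, transpose_sum, transpose_smul, fun j => (hK j).eq]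
  have hM : (∑ j, (-μ) j • K j).PosSemidef := by
    simpa [Finset.sum_neg_distrib] using posSemidef_neg_of_forall_trace_mul_lt hsymm hlt
  have := h (-μ) (neg_ne_zero.mpr hμ) hM
  rw [dotProduct_neg] at this
  linarith

end SufficientStatistics

theorem sufficient_statistics_cone_dual_to_concentration_cone_general
    (m d : ℕ) (K : Fin d → Matrix (Fin m) (Fin m) ℝ)
    (hsymm : ∀ j, (K j).IsSymm)
    (hindep : LinearIndependent ℝ K)
    (t : Fin d → ℝ) :
    (∃ S : Matrix (Fin m) (Fin m) ℝ, S.PosDef ∧ ∀ j, (S * K j).trace = t j) ↔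
      (∀ l : Fin d → ℝ, l ≠ 0 → (∑ j, l j • K j).PosSemidef →
        0 < ∑ j, t j * l j) := by
  constructor
  · rintro ⟨S, hS, hSt⟩ l hl hM
    have ht : t = sufficientStatMap K S := funext fun j => (hSt j).symm
    have hM0 : ∑ j, l j • K j ≠ 0 := fun h0 =>
      hl (funext (Fintype.linearIndependent_iff.mp hindep l h0))
    change 0 < t ⬝ᵥ l
    rw [ht, sufficientStatMap_dotProduct]
    exact hS.trace_mul_pos hM hM0
  · intro h
    obtain ⟨A, hA, rfl⟩ := mem_image_posQuad_of_forall_posSemidef hsymm hindep h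
    refine ⟨(2⁻¹ : ℝ) • (A + Aᵀ), hA.posDef_add_transpose.smul (by norm_num), fun j => ?_⟩
    rw [← sufficientStatMap_apply, map_smul, map_add, sufficientStatMap_transpose hsymm,
      ← two_smul ℝ, smul_smul, inv_mul_cancel₀ two_ne_zero, one_smul]

/-- Duality between the cone of sufficient statistics and the cone of
concentration matrices: a vector `t ∈ ℝ^d` is the image of a positive definite
matrix under `S ↦ (⟨S,K₁⟩,…,⟨S,K_d⟩)` iff `⟨t,λ⟩ > 0` for every nonzero `λ`
with `∑ λⱼ Kⱼ` positive semidefinite. -/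
theorem sufficient_statistics_cone_dual_to_concentration_cone
    (m d : ℕ) (K : Fin d → Matrix (Fin m) (Fin m) ℝ)
    (hsymm : ∀ j, (K j).IsSymm)
    (hindep : LinearIndependent ℝ K)
    (hpd : ∃ l : Fin d → ℝ, (∑ j, l j • K j).PosDef)
    (t : Fin d → ℝ) :
    (∃ S : Matrix (Fin m) (Fin m) ℝ, S.PosDef ∧ ∀ j, (S * K j).trace = t j) ↔
      (∀ l : Fin d → ℝ, l ≠ 0 → (∑ j, l j • K j).PosSemidef →
        0 < ∑ j, t j * l j) :=
  sufficient_statistics_cone_dual_to_concentration_cone_general m d K hsymm hindep t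
end

section
/- Let K_1, …, K_d be real symmetric m×m matrices such that some linear combination ∑_j λ_j K_j is positive definite, and let π denote the linear map sending a symmetric m×m matrix S to (trace(S·K_1),…,trace(S·K_d)) ∈ ℝ^d. Then the image of the positive semidefinite cone under π is closed and equals the topological closure of the image of the positive definite cone under π; that is, closure(π({S positive definite})) = π({S positive semidefinite}). -/
/-!
If `A = ∑ lⱼ • Kⱼ` is positive definite then `c • 1 ≤ A` for some `c > 0`, so on the positive
semidefinite cone the functional `y ↦ ∑ lⱼ yⱼ` pulls back along `π` to `S ↦ tr (S A) ≥ c · tr S`,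
and `tr S` bounds every entry of `S`. Hence `π` restricted to the closed PSD cone has compact
preimages of compact sets, so its image is closed. The PD cone is dense in the PSD cone
(`S = lim (S + ε • 1)`), so its image is dense in that closed image.
-/

open Set Filter Topology

theorem isClosed_image_of_isCompact_inter_preimage {X Y : Type*} [TopologicalSpace X]
    [TopologicalSpace Y] [T2Space Y] [WeaklyLocallyCompactSpace Y] {f : X → Y}
    (hf : Continuous f) {F : Set X} (h : ∀ K, IsCompact K → IsCompact (F ∩ f ⁻¹' K)) :
    IsClosed (f '' F) := by
  refine isClosed_of_closure_subset fun y hy => ?_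
  obtain ⟨K, hK, hKy⟩ := exists_compact_mem_nhds y
  have hyK : y ∈ closure (f '' F ∩ K) := mem_closure_iff_nhds.2 fun t ht => by
    simpa only [inter_assoc, inter_comm K] using
      mem_closure_iff_nhds.1 hy (t ∩ K) (inter_mem ht hKy)
  rw [← image_inter_preimage] at hyK
  exact image_mono inter_subset_left (((h K hK).image hf).isClosed.closure_subset hyK)

namespace Matrix

variable {n : Type*} [Fintype n]

section RCLike

open scoped ComplexOrder

variable {𝕜 : Type*} [RCLike 𝕜]

theorem isClosed_setOf_posSemidef : IsClosed {S : Matrix n n 𝕜 | S.PosSemidef} := by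
  simp only [posSemidef_iff_dotProduct_mulVec, ofPred_and, ofPred_forall]
  exact (isClosed_eq (by fun_prop) continuous_id).inter
    (isClosed_iInter fun x => isClosed_le continuous_const (by fun_prop))

theorem closure_setOf_posDef : closure {S : Matrix n n 𝕜 | S.PosDef} = {S | S.PosSemidef} := by
  classical
  refine subset_antisymm (closure_minimal (fun S hS => hS.posSemidef) isClosed_setOf_posSemidef)
    fun S hS => ?_
  have hlim : Tendsto (fun ε : ℝ => S + ε • (1 : Matrix n n 𝕜)) (𝓝[>] 0) (𝓝 S) := by
    refine (Continuous.tendsto' ?_ 0 S (by simp)).mono_left nhdsWithin_le_nhds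
    fun_prop
  exact mem_closure_of_tendsto hlim <| eventually_nhdsWithin_of_forall fun ε hε =>
    PosDef.posSemidef_add hS (PosDef.one.smul hε)

open scoped MatrixOrder in
theorem PosSemidef.trace_mul_nonneg {S M : Matrix n n 𝕜} (hS : S.PosSemidef)
    (hM : M.PosSemidef) : 0 ≤ (S * M).trace := by
  classical
  obtain ⟨B, rfl⟩ := CStarAlgebra.nonneg_iff_eq_star_mul_self.mp hS.nonneg
  rw [Matrix.mul_assoc, trace_mul_comm, star_eq_conjTranspose]
  exact (hM.mul_mul_conjTranspose_same B).trace_nonneg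

end RCLike

theorem PosSemidef.abs_apply_le_trace {S : Matrix n n ℝ} (hS : S.PosSemidef) (i j : n) :
    |S i j| ≤ S.trace := by
  classical
  have hsymm : S j i = S i j := hS.isHermitian.apply i j
  have quad (s : ℝ) : 0 ≤ S i i + 2 * s * S i j + s ^ 2 * S j j := by
    have := hS.dotProduct_mulVec_nonneg (Pi.single i 1 + Pi.single j s)
    simp only [star_trivial, mulVec_add, mulVec_single, MulOpposite.op_one, one_smul,
      op_smul_eq_smul, dotProduct_add, add_dotProduct, single_dotProduct, col_apply, one_mul,
      hsymm, dotProduct_smul, smul_eq_mul] at this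
    linarith
  have hdiag (k : n) : S k k ≤ S.trace :=
    Finset.single_le_sum (f := fun k => S k k) (fun k _ => hS.diag_nonneg) (Finset.mem_univ k)
  rw [abs_le]
  constructor <;> nlinarith [quad 1, quad (-1), hdiag i, hdiag j]

open scoped MatrixOrder

variable [DecidableEq n]

theorem PosDef.exists_pos_smul_one_le {A : Matrix n n ℝ} (hA : A.PosDef) :
    ∃ c : ℝ, 0 < c ∧ c • (1 : Matrix n n ℝ) ≤ A := by
  cases isEmpty_or_nonempty n
  · exact ⟨1, one_pos, le_of_eq (Subsingleton.elim _ _)⟩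
  · have := (CFC.exists_pos_algebraMap_le_iff hA.isHermitian.isSelfAdjoint).2
      fun x hx => hA.isStrictlyPositive.spectrum_pos hx
    simpa [Algebra.algebraMap_eq_smul_one] using this

theorem PosSemidef.mul_trace_le_trace_mul {S A : Matrix n n ℝ} {c : ℝ}
    (hS : S.PosSemidef) (hcA : c • 1 ≤ A) : c * S.trace ≤ (S * A).trace := by
  have := hS.trace_mul_nonneg hcA
  rwa [Matrix.mul_sub, trace_sub, Matrix.mul_smul, Matrix.mul_one, trace_smul, smul_eq_mul,
    sub_nonneg] at this

theorem PosDef.isCompact_setOf_posSemidef_trace_mul_le {A : Matrix n n ℝ} (hA : A.PosDef)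
    (t : ℝ) : IsCompact {S : Matrix n n ℝ | S.PosSemidef ∧ (S * A).trace ≤ t} := by
  obtain ⟨c, hc, hcA⟩ := hA.exists_pos_smul_one_le
  have hclosed : IsClosed {S : Matrix n n ℝ | S.PosSemidef ∧ (S * A).trace ≤ t} :=
    isClosed_setOf_posSemidef.inter
      (isClosed_le (continuous_id.matrix_mul continuous_const).matrix_trace continuous_const)
  refine (isCompact_univ_pi fun _ => isCompact_univ_pi fun _ =>
    isCompact_Icc (a := -(t / c)) (b := t / c)).of_isClosed_subset hclosed ?_
  rintro (S : Matrix n n ℝ) ⟨hS, hSt⟩ i - j -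
  have htr : S.trace ≤ t / c := by
    rw [le_div_iff₀ hc, mul_comm]
    exact (hS.mul_trace_le_trace_mul hcA).trans hSt
  exact abs_le.1 ((hS.abs_apply_le_trace i j).trans htr)

end Matrix

theorem closure_sufficient_statistics_cone_general
    (m d : ℕ) (K : Fin d → Matrix (Fin m) (Fin m) ℝ)
    (hpd : ∃ l : Fin d → ℝ, (∑ j, l j • K j).PosDef) :
    IsClosed ((fun S : Matrix (Fin m) (Fin m) ℝ => fun j => (S * K j).trace) ''
        {S : Matrix (Fin m) (Fin m) ℝ | S.PosSemidef}) ∧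
    closure ((fun S : Matrix (Fin m) (Fin m) ℝ => fun j => (S * K j).trace) ''
        {S : Matrix (Fin m) (Fin m) ℝ | S.PosDef})
      = (fun S : Matrix (Fin m) (Fin m) ℝ => fun j => (S * K j).trace) ''
        {S : Matrix (Fin m) (Fin m) ℝ | S.PosSemidef} := by
  obtain ⟨l, hA⟩ := hpd
  set π := fun S : Matrix (Fin m) (Fin m) ℝ => fun j => (S * K j).trace
  have hπ : Continuous π :=
    continuous_pi fun j => (continuous_id.matrix_mul continuous_const).matrix_trace
  have hpair (S : Matrix (Fin m) (Fin m) ℝ) : ∑ j, l j * π S j = (S * ∑ j, l j • K j).trace := by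
    simp [π, Matrix.mul_sum, Matrix.trace_sum]
  have hclosed : IsClosed (π '' {S | S.PosSemidef}) := by
    refine isClosed_image_of_isCompact_inter_preimage hπ fun C hC => ?_
    obtain ⟨t, ht⟩ := (hC.image (continuous_finsetSum Finset.univ fun j _ =>
      (continuous_apply j).const_smul (l j))).bddAbove
    refine (hA.isCompact_setOf_posSemidef_trace_mul_le t).of_isClosed_subset
      (Matrix.isClosed_setOf_posSemidef.inter (hC.isClosed.preimage hπ)) ?_
    rintro S ⟨hS, hSC⟩
    exact ⟨hS, hpair S ▸ ht ⟨π S, hSC, rfl⟩⟩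
  refine ⟨hclosed, subset_antisymm
    (closure_minimal (image_mono fun S hS => hS.posSemidef) hclosed) ?_⟩
  rw [← Matrix.closure_setOf_posDef]
  exact image_closure_subset_closure_image hπ

/-- The closure of the cone of sufficient statistics: if some linear
combination of the symmetric matrices `K₁,…,K_d` is positive definite, the
image of the positive semidefinite cone under `π : S ↦ (⟨S,K₁⟩,…,⟨S,K_d⟩)` is
closed and equals the closure of the image of the positive definite cone. -/
theorem closure_sufficient_statistics_cone
    (m d : ℕ) (K : Fin d → Matrix (Fin m) (Fin m) ℝ)
    (hsymm : ∀ j, (K j).IsSymm)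
    (hpd : ∃ l : Fin d → ℝ, (∑ j, l j • K j).PosDef) :
    IsClosed ((fun S : Matrix (Fin m) (Fin m) ℝ => fun j => (S * K j).trace) ''
        {S : Matrix (Fin m) (Fin m) ℝ | S.PosSemidef}) ∧
    closure ((fun S : Matrix (Fin m) (Fin m) ℝ => fun j => (S * K j).trace) ''
        {S : Matrix (Fin m) (Fin m) ℝ | S.PosDef})
      = (fun S : Matrix (Fin m) (Fin m) ℝ => fun j => (S * K j).trace) ''
        {S : Matrix (Fin m) (Fin m) ℝ | S.PosSemidef} :=
  closure_sufficient_statistics_cone_general m d K hpd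
end

section
/- Let L be a linear subspace of real symmetric m×m matrices, let S be a real symmetric m×m matrix, and let K̂ ∈ L be positive definite. Then K̂ maximizes the function K ↦ log det K − trace(S·K) over the set {K ∈ L : K positive definite} if and only if trace((K̂^{-1} − S)·K) = 0 for all K ∈ L, i.e. if and only if trace(K̂^{-1}·K_j) = trace(S·K_j) for every member K_j of a basis of L. -/
/-!
Along a line `t ↦ K̂ + t • K` the objective `log det − ⟨S, ·⟩` has derivative
`⟨K̂⁻¹ − S, K⟩` at `t = 0`, and `K̂ + t • K` stays positive definite for small `|t|`; so at a
maximizer these derivatives vanish for all `K ∈ L`. Conversely, applying `log λ ≤ λ - 1` to the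
eigenvalues of `K̂^{-1/2} K K̂^{-1/2}` gives the tangent inequality
`log det K ≤ log det K̂ + ⟨K̂⁻¹, K⟩ - m`, and the trace equations turn its right-hand side into
`log det K̂ + ⟨S, K⟩ - ⟨S, K̂⟩`.
-/

open Polynomial Filter Topology
open scoped MatrixOrder ComplexOrder

namespace Matrix

variable {n : Type*} [Fintype n] [DecidableEq n]

section Derivative

variable {𝕜 : Type*} [NontriviallyNormedField 𝕜]

theorem hasDerivAt_det_one_add_smul (M : Matrix n n 𝕜) :
    HasDerivAt (fun t : 𝕜 ↦ (1 + t • M).det) M.trace 0 := by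
  have hp := (det (1 + (X : 𝕜[X]) • M.map C)).hasDerivAt 0
  rw [derivative_det_one_add_X_smul] at hp
  convert hp using 2 with t
  simp [eval_det, ← smul_eq_mul_diagonal]

theorem hasDerivAt_det_add_smul {A : Matrix n n 𝕜} (hA : IsUnit A) (B : Matrix n n 𝕜) :
    HasDerivAt (fun t : 𝕜 ↦ (A + t • B).det) (A.det * (A⁻¹ * B).trace) 0 := by
  have hfactor : ∀ t : 𝕜, A + t • B = A * (1 + t • (A⁻¹ * B)) := fun t ↦ by
    rw [Matrix.mul_add, Matrix.mul_one, Matrix.mul_smul, ← Matrix.mul_assoc,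
      A.mul_nonsing_inv ((isUnit_iff_isUnit_det A).1 hA), Matrix.one_mul]
  simp only [hfactor, det_mul]
  exact (hasDerivAt_det_one_add_smul _).const_mul _

end Derivative

section PosDef

variable {𝕜 : Type*} [RCLike 𝕜]

theorem IsHermitian.eventually_posDef_one_add_smul {B : Matrix n n 𝕜} (hB : B.IsHermitian) :
    ∀ᶠ t : ℝ in 𝓝 0, (1 + t • B).PosDef := by
  have hspec : ∀ᶠ t : ℝ in 𝓝 0, ∀ x ∈ spectrum ℝ B, 0 < 1 + t * x :=
    B.finite_real_spectrum.eventually_all.2 fun x _ ↦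
      Tendsto.eventually_const_lt one_pos (by simpa using (continuous_const.add
        (continuous_id.mul continuous_const)).tendsto (0 : ℝ) (f := fun t : ℝ ↦ 1 + t * x))
  filter_upwards [hspec] with t ht
  have hcfc : cfc (fun x : ℝ ↦ 1 + t * x) B = 1 + t • B := by
    rw [cfc_const_add 1 (fun x : ℝ ↦ t * x) B (ha := hB.isSelfAdjoint),
      cfc_const_mul_id (ha := hB.isSelfAdjoint), map_one]
  rw [← isStrictlyPositive_iff_posDef, ← hcfc]
  exact (cfc_isStrictlyPositive_iff _ B (ha := hB.isSelfAdjoint)).2 ht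

theorem PosDef.exists_posDef_mul_self_eq {A : Matrix n n 𝕜} (hA : A.PosDef) :
    ∃ R : Matrix n n 𝕜, R.PosDef ∧ R * R = A :=
  ⟨CFC.sqrt A, IsStrictlyPositive.posDef hA.isStrictlyPositive.sqrt, CFC.sqrt_mul_sqrt_self A hA.posSemidef.nonneg⟩

theorem PosDef.posDef_mul_mul_self_iff {R X : Matrix n n 𝕜} (hR : R.PosDef) :
    (R * X * R).PosDef ↔ X.PosDef := by
  simpa only [star_eq_conjTranspose, hR.1.eq] using
    IsUnit.posDef_star_left_conjugate_iff (x := X) hR.isUnit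

theorem PosDef.eventually_posDef_add_smul {A B : Matrix n n 𝕜} (hA : A.PosDef)
    (hB : B.IsHermitian) : ∀ᶠ t : ℝ in 𝓝 0, (A + t • B).PosDef := by
  obtain ⟨R, hR, rfl⟩ := hA.exists_posDef_mul_self_eq
  have hRdet := (isUnit_iff_isUnit_det R).1 hR.isUnit
  have hB' : (R⁻¹ * B * R⁻¹).IsHermitian := by
    simpa only [hR.inv.1.eq] using isHermitian_conjTranspose_mul_mul R⁻¹ hB
  filter_upwards [hB'.eventually_posDef_one_add_smul] with t ht
  have hconj : R * R + t • B = R * (1 + t • (R⁻¹ * B * R⁻¹)) * R := by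
    simp only [Matrix.mul_add, Matrix.add_mul, Matrix.mul_one, Matrix.mul_smul, Matrix.smul_mul,
      ← Matrix.mul_assoc, R.mul_nonsing_inv hRdet, Matrix.one_mul, Matrix.mul_assoc _ R⁻¹ R,
      R.nonsing_inv_mul hRdet, Matrix.mul_one]
  rw [hconj, hR.posDef_mul_mul_self_iff]
  exact ht

end PosDef

theorem PosDef.log_det_le_trace_sub_card {B : Matrix n n ℝ} (hB : B.PosDef) :
    Real.log B.det ≤ B.trace - Fintype.card n := by
  have hdet : B.det = ∏ i, hB.1.eigenvalues i := by
    simpa using hB.1.det_eq_prod_eigenvalues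
  rw [hdet, Real.log_prod fun i _ ↦ (hB.eigenvalues_pos i).ne', hB.1.trace_eq_sum_eigenvalues]
  calc ∑ i, Real.log (hB.1.eigenvalues i) ≤ ∑ i, (hB.1.eigenvalues i - 1) :=
        Finset.sum_le_sum fun i _ ↦ Real.log_le_sub_one_of_pos (hB.eigenvalues_pos i)
    _ = ∑ i, hB.1.eigenvalues i - Fintype.card n := by
        simp [Finset.sum_sub_distrib]

theorem PosDef.log_det_le {A K : Matrix n n ℝ} (hA : A.PosDef) (hK : K.PosDef) :
    Real.log K.det ≤ Real.log A.det + (A⁻¹ * K).trace - Fintype.card n := by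
  obtain ⟨R, hR, rfl⟩ := hA.exists_posDef_mul_self_eq
  have hB : (R⁻¹ * K * R⁻¹).PosDef := hR.inv.posDef_mul_mul_self_iff.2 hK
  have hdet : (R⁻¹ * K * R⁻¹).det = K.det / (R * R).det := by
    have hR₀ := hR.det_pos.ne'
    simp only [det_mul, det_nonsing_inv, Ring.inverse_eq_inv']
    field_simp
  have htrace : (R⁻¹ * K * R⁻¹).trace = ((R * R)⁻¹ * K).trace := by
    rw [trace_mul_cycle, mul_inv_rev]
  have hgibbs := hB.log_det_le_trace_sub_card
  rw [hdet, htrace, Real.log_div hK.det_pos.ne' hA.det_pos.ne'] at hgibbs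
  linarith

theorem PosDef.hasDerivAt_log_det_add_smul {A : Matrix n n ℝ} (hA : A.PosDef) (B : Matrix n n ℝ) :
    HasDerivAt (fun t : ℝ ↦ Real.log (A + t • B).det) (A⁻¹ * B).trace 0 := by
  have hA₀ := hA.det_pos.ne'
  simpa [hA₀] using (hasDerivAt_det_add_smul hA.isUnit B).log (by simpa using hA₀)

end Matrix

open Matrix

theorem mle_iff_trace_equations_general
    (m : ℕ) (L : Submodule ℝ (Matrix (Fin m) (Fin m) ℝ))
    (hLsymm : ∀ K ∈ L, (K : Matrix (Fin m) (Fin m) ℝ).IsSymm)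
    (S : Matrix (Fin m) (Fin m) ℝ)
    (Khat : Matrix (Fin m) (Fin m) ℝ) (hKhatL : Khat ∈ L) (hKhat : Khat.PosDef) :
    (∀ K ∈ L, Matrix.PosDef K →
        Real.log K.det - (S * K).trace ≤ Real.log Khat.det - (S * Khat).trace) ↔
      (∀ K ∈ L, ((Khat⁻¹ - S) * K).trace = 0) := by
  have htrace (K : Matrix (Fin m) (Fin m) ℝ) :
      ((Khat⁻¹ - S) * K).trace = (Khat⁻¹ * K).trace - (S * K).trace := by
    rw [Matrix.sub_mul, trace_sub]
  constructor
  · intro hmax K hK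
    have hlocalMax : IsLocalMax
        (fun t : ℝ ↦ Real.log (Khat + t • K).det - (S * (Khat + t • K)).trace) 0 := by
      filter_upwards [hKhat.eventually_posDef_add_smul (isHermitian_iff_isSymm.2 (hLsymm K hK))]
        with t ht
      simpa using hmax _ (L.add_mem hKhatL (L.smul_mem t hK)) ht
    have hlinear : HasDerivAt (fun t : ℝ ↦ (S * (Khat + t • K)).trace) (S * K).trace 0 := by
      simpa [Matrix.mul_add, trace_add] using
        ((hasDerivAt_id (0 : ℝ)).smul_const (S * K).trace).const_add (S * Khat).trace
    rw [htrace]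
    exact hlocalMax.hasDerivAt_eq_zero ((hKhat.hasDerivAt_log_det_add_smul K).sub hlinear)
  · intro htr K hK hKpd
    have hKhat_eq : (S * Khat).trace = m := by
      have := htr Khat hKhatL
      rw [htrace, nonsing_inv_mul _ ((isUnit_iff_isUnit_det _).1 hKhat.isUnit), trace_one,
        Fintype.card_fin] at this
      linarith
    have hK_eq := htr K hK
    rw [htrace] at hK_eq
    have htangent := hKhat.log_det_le hKpd
    rw [Fintype.card_fin] at htangent
    linarith

/-- Characterization of the maximum likelihood estimate: a positive definite
matrix `K̂` in the linear space `L` of symmetric matrices maximizes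
`K ↦ log det K − trace(S·K)` over the positive definite matrices in `L` if and
only if `trace((K̂⁻¹ − S)·K) = 0` for all `K ∈ L`. -/
theorem mle_iff_trace_equations
    (m : ℕ) (L : Submodule ℝ (Matrix (Fin m) (Fin m) ℝ))
    (hLsymm : ∀ K ∈ L, (K : Matrix (Fin m) (Fin m) ℝ).IsSymm)
    (S : Matrix (Fin m) (Fin m) ℝ) (hS : S.IsSymm)
    (Khat : Matrix (Fin m) (Fin m) ℝ) (hKhatL : Khat ∈ L) (hKhat : Khat.PosDef) :
    (∀ K ∈ L, Matrix.PosDef K →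
        Real.log K.det - (S * K).trace ≤ Real.log Khat.det - (S * Khat).trace) ↔
      (∀ K ∈ L, ((Khat⁻¹ - S) * K).trace = 0) :=
  mle_iff_trace_equations_general m L hLsymm S Khat hKhatL hKhat
end

section
/- Let L be a linear subspace of real symmetric m×m matrices and let K ∈ L be positive definite. Then K^{-1} is the unique maximizer of the determinant over the spectrahedron {Σ positive definite : trace(Σ·K') = trace(K^{-1}·K') for all K' ∈ L}; that is, for every positive definite Σ with trace(Σ·K') = trace(K^{-1}·K') for all K' ∈ L and Σ ≠ K^{-1}, one has det Σ < det K^{-1}. -/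
/-!
With `S = √K`, the matrix `B = S Σ S` is positive definite, `det B = det Σ · det K` and
`trace B = trace (Σ K)`. Applying `λ ≤ exp (λ - 1)`, strict for `λ ≠ 1`, to the eigenvalues of `B`
gives `det Σ · det K < exp (trace (Σ K) - m)` unless `Σ = K⁻¹` (the Gaussian Kullback–Leibler
inequality). On the fiber, testing against `K ∈ L` itself gives `trace (Σ K) = trace (K⁻¹ K) = m`.
-/

open Matrix

namespace Matrix

variable {n : Type*} [Fintype n] [DecidableEq n]

lemma IsHermitian.eq_one_of_eigenvalues_eq_one {𝕜 : Type*} [RCLike 𝕜] {A : Matrix n n 𝕜}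
    (hA : A.IsHermitian) (h : ∀ i, hA.eigenvalues i = 1) : A = 1 := by
  have hdiag : RCLike.ofReal ∘ hA.eigenvalues = fun _ ↦ (1 : 𝕜) := by ext i; simp [h]
  rw [hA.spectral_theorem, hdiag, diagonal_one, map_one]

lemma PosDef.det_lt_exp_trace_sub_card {B : Matrix n n ℝ} (hB : B.PosDef) (hne : B ≠ 1) :
    B.det < Real.exp (B.trace - Fintype.card n) := by
  obtain ⟨i, hi⟩ : ∃ i, hB.isHermitian.eigenvalues i ≠ 1 := by
    by_contra! h
    exact hne (hB.isHermitian.eq_one_of_eigenvalues_eq_one h)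
  have hexp :
      Real.exp (B.trace - Fintype.card n) = ∏ j, Real.exp (hB.isHermitian.eigenvalues j - 1) := by
    rw [← Real.exp_sum, Finset.sum_sub_distrib, hB.isHermitian.trace_eq_sum_eigenvalues]
    simp
  rw [hB.isHermitian.det_eq_prod_eigenvalues, hexp]
  refine Finset.prod_lt_prod (fun j _ ↦ by simpa using hB.eigenvalues_pos j)
    (fun j _ ↦ by simpa using Real.add_one_le_exp (hB.isHermitian.eigenvalues j - 1))
    ⟨i, Finset.mem_univ i, by simpa using Real.add_one_lt_exp (sub_ne_zero.mpr hi)⟩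

open scoped MatrixOrder in
lemma PosDef.det_mul_det_lt_exp_trace_mul_sub_card {Sig K : Matrix n n ℝ} (hSig : Sig.PosDef)
    (hK : K.PosDef) (hne : Sig ≠ K⁻¹) :
    Sig.det * K.det < Real.exp ((Sig * K).trace - Fintype.card n) := by
  set S := CFC.sqrt K
  have hS : S.PosDef := hK.isStrictlyPositive.sqrt.posDef
  have hSS : S * S = K := CFC.sqrt_mul_sqrt_self K hK.posSemidef.nonneg
  have hB : (S * Sig * S).PosDef := by
    simpa only [hS.1.eq] using
      hSig.conjTranspose_mul_mul_same (mulVec_injective_iff_isUnit.mpr hS.isUnit)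
  have hBne : S * Sig * S ≠ 1 := by
    refine fun h ↦ hne (inv_eq_left_inv (hS.isUnit.mul_left_cancel ?_)).symm
    rw [← hSS, ← mul_assoc, ← mul_assoc, h, one_mul, mul_one]
  have hdet : (S * Sig * S).det = Sig.det * K.det := by
    rw [← hSS, det_mul, det_mul, det_mul]; ring
  have htr : (S * Sig * S).trace = (Sig * K).trace := by
    rw [trace_mul_comm, ← mul_assoc, hSS, trace_mul_comm]
  simpa only [hdet, htr] using hB.det_lt_exp_trace_sub_card hBne

end Matrix

theorem inverse_is_analytic_center_general
    (m : ℕ) (L : Submodule ℝ (Matrix (Fin m) (Fin m) ℝ))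
    (K : Matrix (Fin m) (Fin m) ℝ) (hKL : K ∈ L) (hK : K.PosDef) :
    ∀ Sig : Matrix (Fin m) (Fin m) ℝ, Sig.PosDef →
      (∀ K' ∈ L, (Sig * K').trace = (K⁻¹ * K').trace) →
      Sig ≠ K⁻¹ → Sig.det < (K⁻¹).det := by
  intro Sig hSig hfib hne
  have htr : (Sig * K).trace = m := by
    rw [hfib K hKL, nonsing_inv_mul K hK.det_pos.ne'.isUnit, trace_one, Fintype.card_fin]
  have hlt := hSig.det_mul_det_lt_exp_trace_mul_sub_card hK hne
  rw [htr, Fintype.card_fin, sub_self, Real.exp_zero] at hlt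
  rwa [det_nonsing_inv, Ring.inverse_eq_inv', ← one_div, lt_div_iff₀ hK.det_pos]

/-- For a positive definite matrix `K` in a linear space `L` of symmetric
matrices, `K⁻¹` is the unique maximizer of the determinant over the
spectrahedron of positive definite matrices with the same sufficient
statistics as `K⁻¹`: any other such matrix has strictly smaller determinant. -/
theorem inverse_is_analytic_center
    (m : ℕ) (L : Submodule ℝ (Matrix (Fin m) (Fin m) ℝ))
    (hLsymm : ∀ K ∈ L, (K : Matrix (Fin m) (Fin m) ℝ).IsSymm)
    (K : Matrix (Fin m) (Fin m) ℝ) (hKL : K ∈ L) (hK : K.PosDef) :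
    ∀ Sig : Matrix (Fin m) (Fin m) ℝ, Sig.PosDef →
      (∀ K' ∈ L, (Sig * K').trace = (K⁻¹ * K').trace) →
      Sig ≠ K⁻¹ → Sig.det < (K⁻¹).det :=
  inverse_is_analytic_center_general m L K hKL hK
end

section
/- Let A be a real d×m matrix whose row space contains a vector with all coordinates strictly positive, and let t ∈ ℝ^d be such that the fiber P = {x ∈ ℝ^m : x_i > 0 for all i, Ax = t} is non-empty. Then there exists a unique point x̂ ∈ P such that the reciprocal vector (1/x̂_1, …, 1/x̂_m) lies in the row space of A; moreover this x̂ is the unique maximizer of the product x_1 x_2 ⋯ x_m over P, i.e. for every x ∈ P with x ≠ x̂ one has x_1⋯x_m < x̂_1⋯x̂_m. (x̂ is the analytic center of the polytope P.) -/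
/-!
The closed fiber `{x ≥ 0 : A x = t}` is compact, because a strictly positive `c = y A` makes
`c ⬝ x = y ⬝ t` a bound on it, so `∏ xᵢ` attains its maximum there; the maximum is positive, hence
attained at an interior point `x̂`. Strict AM–GM at the midpoint of two maximizers shows the maximizer
is strict, and the first-order condition says `x̂⁻¹ ⊥ ker A`, i.e. `x̂⁻¹` lies in the row space.
Conversely, if `x⁻¹` and `x'⁻¹` both lie in the row space and `A x = A x'`, then
`∑ (xᵢ⁻¹ - x'ᵢ⁻¹)(xᵢ - x'ᵢ) = 0`, and every summand is `≤ 0` with equality only when `xᵢ = x'ᵢ`.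
-/

open Matrix Finset

section Products

variable {ι : Type*} [Fintype ι]

theorem prod_mul_prod_lt_prod_midpoint_sq {x y : ι → ℝ} (hx : ∀ i, 0 < x i) (hy : ∀ i, 0 < y i)
    (hxy : x ≠ y) : (∏ i, x i) * ∏ i, y i < (∏ i, (x i + y i) / 2) ^ 2 := by
  rw [← prod_mul_distrib, ← prod_pow]
  obtain ⟨i, hi⟩ := Function.ne_iff.1 hxy
  refine prod_lt_prod (fun i _ => mul_pos (hx i) (hy i))
    (fun i _ => by nlinarith [sq_nonneg (x i - y i)]) ⟨i, mem_univ i, ?_⟩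
  nlinarith [sq_pos_of_ne_zero (sub_ne_zero.2 hi)]

theorem prod_lt_of_isMaxOn_of_convex {K : Set (ι → ℝ)} (hK : Convex ℝ K) {x xhat : ι → ℝ}
    (hmax : IsMaxOn (fun x => ∏ i, x i) K xhat) (hxhatK : xhat ∈ K) (hxK : x ∈ K)
    (hxhat : ∀ i, 0 < xhat i) (hx : ∀ i, 0 < x i) (hne : x ≠ xhat) :
    ∏ i, x i < ∏ i, xhat i := by
  have hmid : (∏ i, (x i + xhat i) / 2) ≤ ∏ i, xhat i :=
    calc ∏ i, (x i + xhat i) / 2 = ∏ i, ((1 / 2 : ℝ) • x + (1 / 2 : ℝ) • xhat) i :=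
          prod_congr rfl fun i _ => by simp only [Pi.add_apply, Pi.smul_apply, smul_eq_mul]; ring
      _ ≤ ∏ i, xhat i := hmax (hK hxK hxhatK (by norm_num) (by norm_num) (by norm_num))
  have hamgm := prod_mul_prod_lt_prod_midpoint_sq hx hxhat hne
  have hmid_pos : 0 < ∏ i, (x i + xhat i) / 2 :=
    prod_pos fun i _ => by linarith [hx i, hxhat i]
  have hxhat_pos : 0 < ∏ i, xhat i := prod_pos fun i _ => hxhat i
  nlinarith [mul_le_mul hmid hmid hmid_pos.le hxhat_pos.le]

theorem hasDerivAt_prod_add_mul {x : ι → ℝ} (hx : ∀ i, x i ≠ 0) (v : ι → ℝ) :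
    HasDerivAt (fun ε => ∏ i, (x i + ε * v i)) ((∏ i, x i) * ((fun i => (x i)⁻¹) ⬝ᵥ v)) 0 := by
  classical
  have hfactor := HasDerivAt.fun_finsetProd (u := univ) (x := (0 : ℝ))
    fun i _ => ((hasDerivAt_id (0 : ℝ)).mul_const (v i)).const_add (x i)
  simp only [id, zero_mul, add_zero, one_mul, smul_eq_mul] at hfactor
  refine hfactor.congr_deriv ?_
  simp only [dotProduct, mul_sum]
  refine sum_congr rfl fun i _ => ?_
  rw [← mul_prod_erase univ x (mem_univ i)]
  field_simp [hx i]

theorem pos_of_isMaxOn_prod {K : Set (ι → ℝ)} (hK : ∀ x ∈ K, 0 ≤ x) {x₀ xhat : ι → ℝ}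
    (hmax : IsMaxOn (fun x => ∏ i, x i) K xhat) (hxhatK : xhat ∈ K) (hx₀K : x₀ ∈ K)
    (hx₀ : ∀ i, 0 < x₀ i) (i : ι) : 0 < xhat i := by
  have hprod : 0 < ∏ i, xhat i := (prod_pos fun i _ => hx₀ i).trans_le (hmax hx₀K)
  exact (hK xhat hxhatK i).lt_of_ne (Ne.symm (prod_ne_zero_iff.1 hprod.ne' i (mem_univ i)))

end Products

theorem inv_sub_inv_mul_sub {a b : ℝ} (ha : a ≠ 0) (hb : b ≠ 0) :
    (a⁻¹ - b⁻¹) * (a - b) = -((a - b) ^ 2 / (a * b)) := by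
  field_simp
  ring

namespace Matrix

variable {ι κ : Type*} [Fintype ι]

theorem exists_eq_vecMul_of_dotProduct_eq_zero [Fintype κ] (A : Matrix κ ι ℝ) (w : ι → ℝ)
    (hw : ∀ v, A *ᵥ v = 0 → w ⬝ᵥ v = 0) :
    ∃ y : κ → ℝ, w = y ᵥ* A := by
  classical
  have hmem : dotProductEquiv ℝ ι w ∈ A.mulVecLin.ker.dualAnnihilator :=
    (Submodule.mem_dualAnnihilator _).2 fun v hv => hw v hv
  rw [← LinearMap.range_dualMap_eq_dualAnnihilator_ker] at hmem
  obtain ⟨ψ, hψ⟩ := hmem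
  set y := (dotProductEquiv ℝ κ).symm ψ
  refine ⟨y, (dotProductEquiv ℝ ι).injective <| LinearMap.ext fun v => ?_⟩
  calc w ⬝ᵥ v = ψ (A *ᵥ v) := (LinearMap.congr_fun hψ v).symm
    _ = y ⬝ᵥ A *ᵥ v := by rw [← (dotProductEquiv ℝ κ).apply_symm_apply ψ]; rfl
    _ = y ᵥ* A ⬝ᵥ v := dotProduct_mulVec _ _ _

def nonnegFiber (A : Matrix κ ι ℝ) (t : κ → ℝ) : Set (ι → ℝ) :=
  {x | 0 ≤ x ∧ A *ᵥ x = t}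

theorem convex_nonnegFiber (A : Matrix κ ι ℝ) (t : κ → ℝ) : Convex ℝ (nonnegFiber A t) :=
  (convex_Ici 0).inter ((convex_singleton t).linear_preimage A.mulVecLin)

theorem isCompact_nonnegFiber [Fintype κ] (A : Matrix κ ι ℝ) (t : κ → ℝ) {y : κ → ℝ}
    (hy : ∀ i, 0 < (y ᵥ* A) i) : IsCompact (nonnegFiber A t) := by
  have hclosed : IsClosed (nonnegFiber A t) :=
    isClosed_Ici.inter (isClosed_eq A.mulVecLin.continuous_of_finiteDimensional continuous_const)
  refine isCompact_Icc.of_isClosed_subset hclosed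
    (fun x hx => ⟨hx.1, fun i => (le_div_iff₀ (hy i)).2 ?_⟩ : _ ⊆ Set.Icc 0 fun i => y ⬝ᵥ t / (y ᵥ* A) i)
  calc x i * (y ᵥ* A) i = (y ᵥ* A) i * x i := mul_comm _ _
    _ ≤ ∑ j, (y ᵥ* A) j * x j :=
      single_le_sum (f := fun j => (y ᵥ* A) j * x j)
        (fun j _ => mul_nonneg (hy j).le (hx.1 j)) (mem_univ i)
    _ = y ⬝ᵥ t := by rw [← hx.2, dotProduct_mulVec]; rfl

theorem dotProduct_inv_eq_zero_of_isMaxOn {A : Matrix κ ι ℝ} {t : κ → ℝ} {xhat : ι → ℝ}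
    (hmax : IsMaxOn (fun x => ∏ i, x i) (nonnegFiber A t) xhat) (hxhatK : xhat ∈ nonnegFiber A t)
    (hxhat : ∀ i, 0 < xhat i) {v : ι → ℝ} (hv : A *ᵥ v = 0) :
    (fun i => (xhat i)⁻¹) ⬝ᵥ v = 0 := by
  have hline : ∀ ε : ℝ, A *ᵥ (xhat + ε • v) = t := fun ε => by
    rw [mulVec_add, mulVec_smul, hv, hxhatK.2, smul_zero, add_zero]
  have hpos : ∀ᶠ ε in nhds (0 : ℝ), ∀ i, 0 < xhat i + ε * v i :=
    Filter.eventually_all.2 fun i => continuousAt_const.eventually_lt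
      (continuous_const.add (continuous_id.mul continuous_const)).continuousAt
      (by simpa using hxhat i)
  have hloc : IsLocalMax (fun ε => ∏ i, (xhat i + ε * v i)) 0 := by
    filter_upwards [hpos] with ε hε
    simpa using hmax ⟨fun i => (hε i).le, hline ε⟩
  have hderiv := (hasDerivAt_prod_add_mul (fun i => (hxhat i).ne') v).deriv
  rw [hloc.deriv_eq_zero] at hderiv
  exact (mul_eq_zero.1 hderiv.symm).resolve_left (prod_pos fun i _ => hxhat i).ne'

theorem eq_of_inv_eq_vecMul [Fintype κ] {A : Matrix κ ι ℝ} {x x' : ι → ℝ} {y y' : κ → ℝ}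
    (hx : ∀ i, 0 < x i) (hx' : ∀ i, 0 < x' i) (hA : A *ᵥ x = A *ᵥ x')
    (hy : (fun i => (x i)⁻¹) = y ᵥ* A) (hy' : (fun i => (x' i)⁻¹) = y' ᵥ* A) : x = x' := by
  have hsum : ∑ i, ((x i)⁻¹ - (x' i)⁻¹) * (x i - x' i) = 0 :=
    calc ∑ i, ((x i)⁻¹ - (x' i)⁻¹) * (x i - x' i)
        = (y - y') ᵥ* A ⬝ᵥ (x - x') := by
          rw [sub_vecMul, ← hy, ← hy']
          rfl
      _ = 0 := by rw [← dotProduct_mulVec, mulVec_sub, hA, sub_self, dotProduct_zero]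
  have hterm : ∀ i, ((x i)⁻¹ - (x' i)⁻¹) * (x i - x' i) = -((x i - x' i) ^ 2 / (x i * x' i)) :=
    fun i => inv_sub_inv_mul_sub (hx i).ne' (hx' i).ne'
  simp only [hterm, sum_neg_distrib, neg_eq_zero] at hsum
  rw [sum_eq_zero_iff_of_nonneg fun i _ =>
    div_nonneg (sq_nonneg _) (mul_pos (hx i) (hx' i)).le] at hsum
  funext i
  have := hsum i (mem_univ i)
  rw [div_eq_zero_iff, pow_eq_zero_iff two_ne_zero, sub_eq_zero] at this
  exact this.resolve_right (mul_pos (hx i) (hx' i)).ne'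

end Matrix

/-- Analytic center of the fiber polytope: if the row space of `A` contains a
strictly positive vector and the fiber `P = {x > 0 : Ax = t}` is non-empty,
then there is a unique point `x̂ ∈ P` whose coordinatewise reciprocal lies in
the row space of `A`, and this `x̂` is the unique maximizer of the product of
the coordinates over `P`. -/
theorem analytic_center_of_fiber
    (d m : ℕ) (A : Matrix (Fin d) (Fin m) ℝ)
    (hrow : ∃ y : Fin d → ℝ, ∀ i, 0 < Matrix.vecMul y A i)
    (t : Fin d → ℝ)
    (hne : {x : Fin m → ℝ | (∀ i, 0 < x i) ∧ A.mulVec x = t}.Nonempty) :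
    ∃ xhat : Fin m → ℝ,
      ((∀ i, 0 < xhat i) ∧ A.mulVec xhat = t) ∧
      (∃ y : Fin d → ℝ, (fun i => (xhat i)⁻¹) = Matrix.vecMul y A) ∧
      (∀ x : Fin m → ℝ, (∀ i, 0 < x i) → A.mulVec x = t →
        (∃ y : Fin d → ℝ, (fun i => (x i)⁻¹) = Matrix.vecMul y A) → x = xhat) ∧
      (∀ x : Fin m → ℝ, (∀ i, 0 < x i) → A.mulVec x = t → x ≠ xhat →
        ∏ i, x i < ∏ i, xhat i) := by
  obtain ⟨x₀, hx₀, hx₀t⟩ := hne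
  obtain ⟨y₀, hy₀⟩ := hrow
  have hx₀K : x₀ ∈ nonnegFiber A t := ⟨fun i => (hx₀ i).le, hx₀t⟩
  obtain ⟨xhat, hxhatK, hmax⟩ := (isCompact_nonnegFiber A t hy₀).exists_isMaxOn ⟨x₀, hx₀K⟩
    (continuous_finsetProd _ fun i _ => continuous_apply i).continuousOn
  have hxhat : ∀ i, 0 < xhat i := pos_of_isMaxOn_prod (fun _ hx => hx.1) hmax hxhatK hx₀K hx₀
  obtain ⟨y, hy⟩ := exists_eq_vecMul_of_dotProduct_eq_zero A _ fun v hv =>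
    dotProduct_inv_eq_zero_of_isMaxOn hmax hxhatK hxhat hv
  refine ⟨xhat, ⟨hxhat, hxhatK.2⟩, ⟨y, hy⟩, ?_, ?_⟩
  · rintro x hx hxt ⟨y', hy'⟩
    exact eq_of_inv_eq_vecMul hx hxhat (hxt.trans hxhatK.2.symm) hy' hy
  · intro x hx hxt hne
    exact prod_lt_of_isMaxOn_of_convex (convex_nonnegFiber A t) hmax hxhatK
      ⟨fun i => (hx i).le, hxt⟩ hxhat hx hne
end

section
/- For λ = (λ_1, λ_2, λ_3) in the open cube (−1,1)^3, define t_i(λ) = 1/(1+λ_i) − 1/(1−λ_i) for i = 1,2,3 and t_4(λ) = ∑_{i=1}^3 (1/(1+λ_i) + 1/(1−λ_i)). Then the map λ ↦ (t_1(λ)/t_4(λ), t_2(λ)/t_4(λ), t_3(λ)/t_4(λ)) is a bijection from the open cube (−1,1)^3 onto the open octahedron {t ∈ ℝ^3 : |t_1| + |t_2| + |t_3| < 1}. -/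
/-!
Write `dᵢ = 1/(1+λᵢ) - 1/(1-λᵢ)` and `sᵢ = 1/(1+λᵢ) + 1/(1-λᵢ)`. On `(-1, 1)` one has
`sᵢ² - dᵢ² = 2 sᵢ`, i.e. `sᵢ = 1 + √(1 + dᵢ²)`, and `λ ↦ d` is a decreasing bijection onto `ℝ`.
If `t` is the image of `λ` and `μ = ∑ sᵢ`, then `dᵢ = tᵢ μ`, so `μ` is a fixed point of
`μ ↦ ∑ (1 + √(1 + (tᵢ μ)²))`. As `x ↦ √(1 + x²)` is `1`-Lipschitz, this map is a contraction with
constant `∑ |tᵢ| < 1` whenever `t` lies in the octahedron. Its unique fixed point determines `μ`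
from `t`, hence every `dᵢ` and every `λᵢ`; conversely, solving `dᵢ = tᵢ μ` at the fixed point
produces a preimage of `t`.
-/

open Set Finset

noncomputable section

namespace CubeOctahedron

def diffRecip (a : ℝ) : ℝ := 1 / (1 + a) - 1 / (1 - a)

def sumRecip (a : ℝ) : ℝ := 1 / (1 + a) + 1 / (1 - a)

variable {a : ℝ}

lemma sumRecip_eq_one_add_sqrt (ha : a ∈ Ioo (-1 : ℝ) 1) :
    sumRecip a = 1 + √(1 + diffRecip a ^ 2) := by
  obtain ⟨h₁, h₂⟩ := ha
  have hpos : 0 < 1 - a ^ 2 := by nlinarith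
  have hsq : 1 + diffRecip a ^ 2 = ((1 + a ^ 2) / (1 - a ^ 2)) ^ 2 := by
    unfold diffRecip
    field_simp [show 1 + a ≠ 0 by linarith, show 1 - a ≠ 0 by linarith]
    ring
  rw [hsq, Real.sqrt_sq (by positivity), sumRecip]
  field_simp [show 1 + a ≠ 0 by linarith, show 1 - a ≠ 0 by linarith]
  ring

lemma abs_diffRecip_lt_sumRecip (ha : a ∈ Ioo (-1 : ℝ) 1) : |diffRecip a| < sumRecip a := by
  rw [sumRecip_eq_one_add_sqrt ha]
  linarith [Real.abs_le_sqrt (le_add_of_nonneg_left zero_le_one : diffRecip a ^ 2 ≤ 1 + _)]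

lemma sumRecip_pos (ha : a ∈ Ioo (-1 : ℝ) 1) : 0 < sumRecip a :=
  (abs_nonneg _).trans_lt (abs_diffRecip_lt_sumRecip ha)

lemma strictAntiOn_diffRecip : StrictAntiOn diffRecip (Ioo (-1 : ℝ) 1) := by
  intro a ha b hb hab
  have h₁ : 1 / (1 + b) < 1 / (1 + a) := one_div_lt_one_div_of_lt (by linarith [ha.1]) (by linarith)
  have h₂ : 1 / (1 - a) < 1 / (1 - b) := one_div_lt_one_div_of_lt (by linarith [hb.2]) (by linarith)
  unfold diffRecip
  linarith

/-- The root in `(-1, 1)` of `y a² - 2a - y = 0`, i.e. of `diffRecip a = y`. -/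
def diffRecipInv (y : ℝ) : ℝ := -y / (1 + √(1 + y ^ 2))

lemma diffRecipInv_mem (y : ℝ) : diffRecipInv y ∈ Ioo (-1 : ℝ) 1 := by
  have hy : |y| ≤ √(1 + y ^ 2) := Real.abs_le_sqrt (by linarith)
  have hpos : 0 < 1 + √(1 + y ^ 2) := by positivity
  rw [diffRecipInv, Set.mem_Ioo, ← abs_lt, abs_div, abs_neg, abs_of_pos hpos, div_lt_one hpos]
  linarith

lemma diffRecip_diffRecipInv (y : ℝ) : diffRecip (diffRecipInv y) = y := by
  set r := √(1 + y ^ 2)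
  have hr : r ^ 2 = 1 + y ^ 2 := Real.sq_sqrt (by positivity)
  have hy : |y| ≤ r := Real.abs_le_sqrt (by linarith)
  have hr₀ : 0 ≤ r := Real.sqrt_nonneg _
  have h₁ : 0 < 1 + r - y := by linarith [le_abs_self y]
  have h₂ : 0 < 1 + r + y := by linarith [neg_abs_le y]
  have e₁ : 1 + diffRecipInv y = (1 + r - y) / (1 + r) := by
    rw [diffRecipInv]; field_simp; ring
  have e₂ : 1 - diffRecipInv y = (1 + r + y) / (1 + r) := by
    rw [diffRecipInv]; field_simp; ring
  rw [diffRecip, e₁, e₂, one_div_div, one_div_div, div_sub_div _ _ h₁.ne' h₂.ne',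
    div_eq_iff (by positivity)]
  linear_combination (-y) * hr

lemma abs_sqrt_one_add_sq_sub_le (x y : ℝ) : |√(1 + x ^ 2) - √(1 + y ^ 2)| ≤ |x - y| := by
  have key : ∀ z : ℝ, ‖(1 : ℂ) + z * Complex.I‖ = √(1 + z ^ 2) := fun z => by
    simpa using Complex.norm_add_mul_I 1 z
  rw [← key, ← key]
  convert abs_norm_sub_norm_le _ _ using 1
  rw [add_sub_add_left_eq_sub, ← sub_mul, norm_mul, Complex.norm_I, mul_one, ← Complex.ofReal_sub,
    Complex.norm_real, Real.norm_eq_abs]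

variable {ι : Type*} [Fintype ι]

def cubeToOctahedron (l : ι → ℝ) : ι → ℝ := fun i => diffRecip (l i) / ∑ j, sumRecip (l j)

def denomMap (t : ι → ℝ) (μ : ℝ) : ℝ := ∑ i, (1 + √(1 + (t i * μ) ^ 2))

lemma contractingWith_denomMap {t : ι → ℝ} (ht : ∑ i, |t i| < 1) :
    ContractingWith (⟨∑ i, |t i|, by positivity⟩ : NNReal) (denomMap t) := by
  refine ⟨ht, LipschitzWith.of_dist_le_mul fun x y => ?_⟩
  simp only [Real.dist_eq, denomMap, ← Finset.sum_sub_distrib]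
  change _ ≤ (∑ i, |t i|) * |x - y|
  rw [Finset.sum_mul]
  refine (Finset.abs_sum_le_sum_abs _ _).trans (Finset.sum_le_sum fun i _ => ?_)
  calc |1 + √(1 + (t i * x) ^ 2) - (1 + √(1 + (t i * y) ^ 2))|
      ≤ |t i * x - t i * y| := by
        rw [add_sub_add_left_eq_sub]; exact abs_sqrt_one_add_sq_sub_le _ _
    _ = |t i| * |x - y| := by rw [← mul_sub, abs_mul]

variable {l : ι → ℝ}

lemma sum_sumRecip_pos [Nonempty ι] (hl : ∀ i, l i ∈ Ioo (-1 : ℝ) 1) :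
    0 < ∑ j, sumRecip (l j) :=
  Finset.sum_pos (fun j _ => sumRecip_pos (hl j)) univ_nonempty

lemma isFixedPt_denomMap (hl : ∀ i, l i ∈ Ioo (-1 : ℝ) 1) :
    Function.IsFixedPt (denomMap (cubeToOctahedron l)) (∑ j, sumRecip (l j)) := by
  refine Finset.sum_congr rfl fun i _ => ?_
  have : Nonempty ι := ⟨i⟩
  rw [cubeToOctahedron, div_mul_cancel₀ _ (sum_sumRecip_pos hl).ne', sumRecip_eq_one_add_sqrt (hl i)]

lemma mapsTo_cubeToOctahedron :
    MapsTo (cubeToOctahedron (ι := ι)) {l | ∀ i, l i ∈ Ioo (-1 : ℝ) 1} {t | ∑ i, |t i| < 1} := by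
  intro l hl
  rcases isEmpty_or_nonempty ι with _ | _
  · simp
  have hμ := sum_sumRecip_pos hl
  simp only [Set.mem_ofPred_eq, cubeToOctahedron, abs_div, abs_of_pos hμ, ← Finset.sum_div]
  exact (div_lt_one hμ).2 <| Finset.sum_lt_sum_of_nonempty univ_nonempty
    fun i _ => abs_diffRecip_lt_sumRecip (hl i)

theorem bijOn_cubeToOctahedron :
    BijOn (cubeToOctahedron (ι := ι)) {l | ∀ i, l i ∈ Ioo (-1 : ℝ) 1} {t | ∑ i, |t i| < 1} := by
  refine ⟨mapsTo_cubeToOctahedron, fun l hl l' hl' h => ?_, fun t ht => ?_⟩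
  · have hf := contractingWith_denomMap (mapsTo_cubeToOctahedron hl)
    have hμ : ∑ j, sumRecip (l j) = ∑ j, sumRecip (l' j) :=
      hf.fixedPoint_unique' (isFixedPt_denomMap hl) (h ▸ isFixedPt_denomMap hl')
    funext i
    have : Nonempty ι := ⟨i⟩
    have hi := congrFun h i
    rw [cubeToOctahedron, cubeToOctahedron, hμ, div_left_inj' (sum_sumRecip_pos hl').ne'] at hi
    exact strictAntiOn_diffRecip.injOn (hl i) (hl' i) hi
  · have hf := contractingWith_denomMap ht
    set μ := hf.fixedPoint
    set l := fun i => diffRecipInv (t i * μ)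
    have hl : ∀ i, l i ∈ Ioo (-1 : ℝ) 1 := fun i => diffRecipInv_mem _
    have hμ : ∑ j, sumRecip (l j) = μ := by
      refine (Finset.sum_congr rfl fun j _ => ?_).trans hf.fixedPoint_isFixedPt
      rw [sumRecip_eq_one_add_sqrt (hl j), diffRecip_diffRecipInv]
    refine ⟨l, hl, funext fun i => ?_⟩
    have : Nonempty ι := ⟨i⟩
    rw [cubeToOctahedron, hμ, diffRecip_diffRecipInv,
      mul_div_cancel_right₀ _ (hμ ▸ (sum_sumRecip_pos hl).ne')]

end CubeOctahedron

end

open CubeOctahedron in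
/-- Morphing a cube into an octahedron: the map
`λ ↦ (t₁(λ)/t₄(λ), t₂(λ)/t₄(λ), t₃(λ)/t₄(λ))` with
`tᵢ(λ) = 1/(1+λᵢ) − 1/(1−λᵢ)` and `t₄(λ) = ∑ᵢ (1/(1+λᵢ) + 1/(1−λᵢ))`
is a bijection from the open cube `(−1,1)³` onto the open octahedron
`{t : |t₁| + |t₂| + |t₃| < 1}`. -/
theorem cube_to_octahedron_bijOn :
    Set.BijOn
      (fun l : Fin 3 → ℝ => fun i : Fin 3 =>
        (1 / (1 + l i) - 1 / (1 - l i)) /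
          (∑ j : Fin 3, (1 / (1 + l j) + 1 / (1 - l j))))
      {l : Fin 3 → ℝ | ∀ i, l i ∈ Set.Ioo (-1 : ℝ) 1}
      {t : Fin 3 → ℝ | |t 0| + |t 1| + |t 2| < 1} := by
  have h := bijOn_cubeToOctahedron (ι := Fin 3)
  simp only [Fin.sum_univ_three] at h
  exact h
end

section
/- Let E be a symmetric, irreflexive relation on {1,…,m} (the edge set of a graph G), and let E* be the edge set of the suspension graph G* on {0,1,…,m}, namely E* = E ∪ {(0,j), (j,0) : 1 ≤ j ≤ m}. Let S* be a positive definite real (m+1)×(m+1) matrix with rows/columns indexed by 0,1,…,m; write a = S*_{00}, v = (S*_{01},…,S*_{0m}), S' for the lower-right m×m block of S*, and S = S' − (1/a)·v^T v for the Schur complement. Suppose Σ̂ is a positive definite m×m matrix with Σ̂_{ij} = S_{ij} whenever i = j or (i,j) ∈ E, and (Σ̂^{-1})_{ij} = 0 whenever i ≠ j and (i,j) ∉ E. Define the (m+1)×(m+1) block matrix Σ̂* = [[a, v],[v^T, Σ̂ + S' − S]] = [[a, v],[v^T, Σ̂ + (1/a)v^T v]]. Then: (1) Σ̂* is positive definite;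 (2) Σ̂*_{ij} = S*_{ij} whenever i = j or (i,j) ∈ E*; and (3) ((Σ̂*)^{-1})_{ij} = 0 whenever i ≠ j and (i,j) ∉ E*. Hence Σ̂* is the maximum likelihood estimate for S* in the Gaussian graphical model of G*. -/
/-!
Both `S*` and `Σ̂*` are bordered matrices `[[a, v], [vᵀ, D]]` with the same border `(a, v)`, and the
Schur complement `D - a⁻¹ vᵀv` of the corner `a` in `Σ̂*` is `Σ̂` itself. A block matrix with
positive definite corner is positive definite iff its Schur complement is, and the lower right block
of its inverse is the inverse of the Schur complement. Hence `Σ̂*` is positive definite and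
`(Σ̂*)⁻¹` restricts to `Σ̂⁻¹` on `{1, …, m}`, which vanishes on the non-edges of `G`; these are
all the non-edges of `G*`. On the edges and the diagonal of `G`, the lower right block
`Σ̂ + S' - S` of `Σ̂*` agrees with `S'`.
-/

/-- The adjacency relation of the suspension graph `G*` of a graph `G` on
vertices `{1,…,m}`: the new vertex `0` (= `Sum.inl ()`) is joined to every old
vertex, and old vertices are joined as in `G`. -/
def suspensionAdj {m : ℕ} (E : Fin m → Fin m → Prop) :
    Unit ⊕ Fin m → Unit ⊕ Fin m → Prop
  | Sum.inl _, Sum.inl _ => False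
  | Sum.inl _, Sum.inr _ => True
  | Sum.inr _, Sum.inl _ => True
  | Sum.inr i, Sum.inr j => E i j

open Matrix ComplexOrder

namespace Matrix

section Schur

variable {m n : Type*} [Fintype m] [Fintype n] [DecidableEq m] [DecidableEq n]

theorem posDef_fromBlocks₁₁_iff {𝕜 : Type*} [RCLike 𝕜] {A : Matrix m m 𝕜} (B : Matrix m n 𝕜)
    (D : Matrix n n 𝕜) (hA : A.PosDef) :
    (fromBlocks A B Bᴴ D).PosDef ↔ (D - Bᴴ * A⁻¹ * B).PosDef := by
  let := hA.isUnit.invertible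
  have hdet : (fromBlocks A B Bᴴ D).det = A.det * (D - Bᴴ * A⁻¹ * B).det := by
    rw [det_fromBlocks₁₁, invOf_eq_nonsing_inv]
  constructor
  · intro h
    refine ((hA.fromBlocks₁₁ B D).mp h.posSemidef).posDef_iff_det_ne_zero.mpr ?_
    exact right_ne_zero_of_mul (hdet ▸ h.det_pos.ne')
  · intro h
    refine ((hA.fromBlocks₁₁ B D).mpr h.posSemidef).posDef_iff_det_ne_zero.mpr ?_
    rw [hdet]
    exact mul_ne_zero hA.det_pos.ne' h.det_pos.ne'

theorem toBlocks₂₂_inv_fromBlocks {α : Type*} [CommRing α] {A : Matrix m m α} (B : Matrix m n α)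
    (C : Matrix n m α) (D : Matrix n n α) (hA : IsUnit A) (hS : IsUnit (D - C * A⁻¹ * B)) :
    (fromBlocks A B C D)⁻¹.toBlocks₂₂ = (D - C * A⁻¹ * B)⁻¹ := by
  let := hA.invertible
  let : Invertible (D - C * ⅟A * B) := by rw [invOf_eq_nonsing_inv]; exact hS.invertible
  let := fromBlocks₁₁Invertible A B C D
  rw [← invOf_eq_nonsing_inv (fromBlocks A B C D), invOf_fromBlocks₁₁_eq, toBlocks_fromBlocks₂₂,
    invOf_eq_nonsing_inv, invOf_eq_nonsing_inv]

end Schur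

section Bordered

variable {n α : Type*}

def borderedMatrix (a : α) (v : n → α) (D : Matrix n n α) : Matrix (Unit ⊕ n) (Unit ⊕ n) α :=
  fromBlocks (of fun _ _ => a) (replicateRow Unit v) (replicateCol Unit v) D

theorem IsSymm.eq_borderedMatrix {M : Matrix (Unit ⊕ n) (Unit ⊕ n) α} (hM : M.IsSymm) :
    M = borderedMatrix (M (.inl ()) (.inl ())) (fun j => M (.inl ()) (.inr j))
      (M.submatrix .inr .inr) := by
  ext (⟨⟩ | i) (⟨⟩ | j)
  · rfl
  · rfl
  · exact hM.apply _ _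
  · rfl

theorem replicateCol_mul_inv_mul_replicateRow {K : Type*} [Field K] (a : K) (v : n → K) :
    replicateCol Unit v * (of fun _ _ : Unit => a)⁻¹ * replicateRow Unit v =
      a⁻¹ • vecMulVec v v := by
  ext i j
  simp [mul_apply, vecMulVec_apply]
  ring

variable [Fintype n] [DecidableEq n]

theorem posDef_borderedMatrix_iff {a : ℝ} (v : n → ℝ) (D : Matrix n n ℝ) (ha : 0 < a) :
    (borderedMatrix a v D).PosDef ↔ (D - a⁻¹ • vecMulVec v v).PosDef := by
  have hA : (of fun _ _ : Unit => a).PosDef := by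
    convert PosDef.diagonal (fun _ : Unit => ha)
    ext
    simp
  have := posDef_fromBlocks₁₁_iff (replicateRow Unit v) D hA
  rwa [conjTranspose_replicateRow, star_trivial, replicateCol_mul_inv_mul_replicateRow] at this

theorem inv_borderedMatrix_apply_inr_inr {K : Type*} [Field K] {a : K} (v : n → K)
    (D : Matrix n n K) (ha : a ≠ 0) (hS : IsUnit (D - a⁻¹ • vecMulVec v v)) (i j : n) :
    (borderedMatrix a v D)⁻¹ (.inr i) (.inr j) = (D - a⁻¹ • vecMulVec v v)⁻¹ i j := by
  have hA : IsUnit (of fun _ _ : Unit => a) := by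
    rw [isUnit_iff_isUnit_det, det_unique]
    exact ha.isUnit
  rw [← replicateCol_mul_inv_mul_replicateRow] at hS ⊢
  exact congrFun (congrFun (toBlocks₂₂_inv_fromBlocks _ _ D hA hS) i) j

end Bordered

end Matrix

theorem suspension_graph_mle_general
    (m : ℕ) (E : Fin m → Fin m → Prop)
    (Sstar : Matrix (Unit ⊕ Fin m) (Unit ⊕ Fin m) ℝ) (hSstar : Sstar.PosDef)
    (a : ℝ) (ha : a = Sstar (Sum.inl ()) (Sum.inl ()))
    (v : Fin m → ℝ) (hv : ∀ j, v j = Sstar (Sum.inl ()) (Sum.inr j))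
    (S : Matrix (Fin m) (Fin m) ℝ)
    (hSdef : S = Sstar.submatrix Sum.inr Sum.inr - a⁻¹ • Matrix.vecMulVec v v)
    (Sighat : Matrix (Fin m) (Fin m) ℝ) (hSighat : Sighat.PosDef)
    (hfit : ∀ i j, (i = j ∨ E i j) → Sighat i j = S i j)
    (hzero : ∀ i j, i ≠ j → ¬ E i j → Sighat⁻¹ i j = 0)
    (Sigstar : Matrix (Unit ⊕ Fin m) (Unit ⊕ Fin m) ℝ)
    (hSigstar : Sigstar = Matrix.fromBlocks
      (Matrix.of fun _ _ : Unit => a)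
      (Matrix.of fun (_ : Unit) (j : Fin m) => v j)
      (Matrix.of fun (i : Fin m) (_ : Unit) => v i)
      (Sighat + (Sstar.submatrix Sum.inr Sum.inr - S))) :
    Sigstar.PosDef ∧
    (∀ i j, (i = j ∨ suspensionAdj E i j) → Sigstar i j = Sstar i j) ∧
    (∀ i j, i ≠ j → ¬ suspensionAdj E i j → Sigstar⁻¹ i j = 0) := by
  have hSigstar_bordered : Sigstar = borderedMatrix a v (Sighat + a⁻¹ • vecMulVec v v) := by
    rw [hSigstar, hSdef, sub_sub_cancel]; rfl
  have hSstar_bordered : Sstar = borderedMatrix a v (Sstar.submatrix .inr .inr) := by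
    rw [ha, funext hv]
    exact (isHermitian_iff_isSymm.mp hSstar.isHermitian).eq_borderedMatrix
  have hschur : Sighat + a⁻¹ • vecMulVec v v - a⁻¹ • vecMulVec v v = Sighat :=
    add_sub_cancel_right _ _
  have ha_pos : 0 < a := ha ▸ hSstar.diag_pos
  refine ⟨?_, fun i j hij => ?_, ?_⟩
  · rw [hSigstar_bordered, posDef_borderedMatrix_iff _ _ ha_pos, hschur]
    exact hSighat
  · rcases i with ⟨⟩ | i <;> rcases j with ⟨⟩ | j
    case inr.inr =>
      have hedge : i = j ∨ E i j := by simpa [suspensionAdj] using hij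
      rw [hSigstar, fromBlocks_apply₂₂, Matrix.add_apply, Matrix.sub_apply, hfit i j hedge,
        add_sub_cancel]
      rfl
    all_goals rw [hSigstar_bordered, hSstar_bordered]; rfl
  · rintro (⟨⟩ | i) (⟨⟩ | j) hij hadj
    · exact absurd rfl hij
    · exact absurd trivial hadj
    · exact absurd trivial hadj
    · have hunit : IsUnit (Sighat + a⁻¹ • vecMulVec v v - a⁻¹ • vecMulVec v v) :=
        hschur.symm ▸ hSighat.isUnit
      rw [hSigstar_bordered, inv_borderedMatrix_apply_inr_inr _ _ ha_pos.ne' hunit, hschur]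
      exact hzero i j (fun h => hij (h ▸ rfl)) hadj

/-- The MLE on a suspension graph: if `Σ̂` is the MLE for the Schur complement
`S = S' − (1/a)·vᵀv` of a positive definite sample covariance matrix `S*` in
the Gaussian graphical model of `G`, then the block matrix
`Σ̂* = [[a, v],[vᵀ, Σ̂ + S' − S]]` is positive definite, matches `S*` on the
diagonal and on all edges of the suspension graph `G*`, and its inverse
vanishes on all non-edges of `G*`; i.e. `Σ̂*` is the MLE for `S*` in the
Gaussian graphical model of `G*`. -/
theorem suspension_graph_mle
    (m : ℕ) (E : Fin m → Fin m → Prop)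
    (hEsymm : ∀ i j, E i j → E j i) (hEirr : ∀ i, ¬ E i i)
    (Sstar : Matrix (Unit ⊕ Fin m) (Unit ⊕ Fin m) ℝ) (hSstar : Sstar.PosDef)
    (a : ℝ) (ha : a = Sstar (Sum.inl ()) (Sum.inl ()))
    (v : Fin m → ℝ) (hv : ∀ j, v j = Sstar (Sum.inl ()) (Sum.inr j))
    (S : Matrix (Fin m) (Fin m) ℝ)
    (hSdef : S = Sstar.submatrix Sum.inr Sum.inr - a⁻¹ • Matrix.vecMulVec v v)
    (Sighat : Matrix (Fin m) (Fin m) ℝ) (hSighat : Sighat.PosDef)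
    (hfit : ∀ i j, (i = j ∨ E i j) → Sighat i j = S i j)
    (hzero : ∀ i j, i ≠ j → ¬ E i j → Sighat⁻¹ i j = 0)
    (Sigstar : Matrix (Unit ⊕ Fin m) (Unit ⊕ Fin m) ℝ)
    (hSigstar : Sigstar = Matrix.fromBlocks
      (Matrix.of fun _ _ : Unit => a)
      (Matrix.of fun (_ : Unit) (j : Fin m) => v j)
      (Matrix.of fun (i : Fin m) (_ : Unit) => v i)
      (Sighat + (Sstar.submatrix Sum.inr Sum.inr - S))) :
    Sigstar.PosDef ∧
    (∀ i j, (i = j ∨ suspensionAdj E i j) → Sigstar i j = Sstar i j) ∧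
    (∀ i j, i ≠ j → ¬ suspensionAdj E i j → Sigstar⁻¹ i j = 0) :=
  suspension_graph_mle_general m E Sstar hSstar a ha v hv S hSdef Sighat hSighat hfit hzero Sigstar
    hSigstar
end

section
/- Let {1,…,m} be partitioned into three disjoint sets A, B, C, and let Σ be a positive definite real m×m matrix such that (Σ^{-1})_{ab} = 0 for all a ∈ A and b ∈ B. Let Σ_{[A∪C]} denote the principal submatrix of Σ with rows and columns indexed by A ∪ C. Then the inverse of the submatrix agrees with the corresponding blocks of Σ^{-1} on all entries involving A: for all i, j ∈ A ∪ C with i ∈ A or j ∈ A, one has ((Σ_{[A∪C]})^{-1})_{ij} = (Σ^{-1})_{ij}. (In block form, writing K = Σ^{-1} and K^1 = (Σ_{[A∪C]})^{-1}, one has K^1_{AA} = K_{AA} and K^1_{AC} = K_{AC}.) -/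
/-! Let `T = Σ_{[s]}` and `K = Σ⁻¹`. If row `q ∈ s` of `K` vanishes off `s`, then its restriction
`r` to `s` satisfies `r T = (K Σ)_q = e_q`, so `r` is row `q` of `T⁻¹`. For `q ∈ A` the hypothesis
says exactly that row `q` of `K` vanishes on `B`, the complement of `A ∪ C`; entries with only the
column index in `A` follow by symmetry of `T⁻¹` and `K`. -/

namespace Matrix

variable {n R : Type*} [Fintype n]

theorem vecMul_submatrix_val_of_eq_zero [NonUnitalNonAssocSemiring R] (M : Matrix n n R)
    (s : Finset n) (r : n → R) (hr : ∀ k ∉ s, r k = 0) :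
    (r ∘ Subtype.val : s → R) ᵥ* M.submatrix Subtype.val Subtype.val =
      ((r ᵥ* M) ∘ Subtype.val : s → R) := by
  ext j
  simp only [vecMul, dotProduct, submatrix_apply, Function.comp_apply]
  rw [Finset.sum_coe_sort s (fun k => r k * M k j)]
  exact Finset.sum_subset (Finset.subset_univ s) fun k _ hk => by rw [hr k hk, zero_mul]

theorem inv_submatrix_val_apply_eq_of_inv_row_eq_zero [DecidableEq n] [CommRing R]
    {M : Matrix n n R} (hM : IsUnit M.det) {s : Finset n}
    (hs : IsUnit (M.submatrix (Subtype.val : s → n) Subtype.val).det) (q : s)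
    (hq : ∀ k ∉ s, M⁻¹ q k = 0) (p : s) :
    (M.submatrix (Subtype.val : s → n) Subtype.val)⁻¹ q p = M⁻¹ q p := by
  set T := M.submatrix (Subtype.val : s → n) Subtype.val
  have hrow : (M⁻¹ q ∘ Subtype.val : s → R) ᵥ* T = Pi.single q 1 := by
    rw [vecMul_submatrix_val_of_eq_zero M s _ hq]
    ext k
    change (M⁻¹ * M) q k = _
    simp [nonsing_inv_mul _ hM, one_apply, Pi.single_apply, eq_comm]
  calc T⁻¹ q p = (Pi.single q 1 ᵥ* T⁻¹) p := by rw [single_one_vecMul]; rfl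
    _ = M⁻¹ q p := by rw [← hrow, vecMul_vecMul, mul_nonsing_inv _ hs, vecMul_one]; rfl

end Matrix

open Matrix

theorem submatrix_inverse_agrees_on_separated_block_general
    (m : ℕ) (A B C : Finset (Fin m))
    (hcover : A ∪ B ∪ C = Finset.univ)
    (Sig : Matrix (Fin m) (Fin m) ℝ) (hSig : Sig.PosDef)
    (hzero : ∀ a ∈ A, ∀ b ∈ B, Sig⁻¹ a b = 0) :
    ∀ i j : {x : Fin m // x ∈ A ∪ C},
      ((i : Fin m) ∈ A ∨ (j : Fin m) ∈ A) →
      (Sig.submatrix (Subtype.val : {x : Fin m // x ∈ A ∪ C} → Fin m)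
          Subtype.val)⁻¹ i j
        = Sig⁻¹ (i : Fin m) (j : Fin m) := by
  set T := Sig.submatrix (Subtype.val : {x : Fin m // x ∈ A ∪ C} → Fin m) Subtype.val
  have hT : T.PosDef := hSig.submatrix Subtype.val_injective
  have hB (k : Fin m) (hk : k ∉ A ∪ C) : k ∈ B := by
    have hk' : k ∈ A ∪ B ∪ C := hcover ▸ Finset.mem_univ k
    grind
  have hrow (q : {x : Fin m // x ∈ A ∪ C}) (hq : (q : Fin m) ∈ A) (p) : T⁻¹ q p = Sig⁻¹ q p :=
    inv_submatrix_val_apply_eq_of_inv_row_eq_zero hSig.det_pos.ne'.isUnit hT.det_pos.ne'.isUnit q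
      (fun k hk => hzero q hq k (hB k hk)) p
  rintro i j (hi | hj)
  · exact hrow i hi j
  · rw [← hT.isHermitian.inv.apply, hrow j hj i]
    exact hSig.isHermitian.inv.apply i j

/-- Decoupling of the MLE equations under a clique-sum separation: if
`{1,…,m} = A ⊔ B ⊔ C` and `Σ ≻ 0` satisfies `(Σ⁻¹)_{ab} = 0` for all `a ∈ A`,
`b ∈ B`, then the inverse of the principal submatrix `Σ_{[A∪C]}` agrees with
the corresponding entries of `Σ⁻¹` whenever one of the indices lies in `A`
(in block form, `K¹_{AA} = K_{AA}` and `K¹_{AC} = K_{AC}`). -/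
theorem submatrix_inverse_agrees_on_separated_block
    (m : ℕ) (A B C : Finset (Fin m))
    (hAB : Disjoint A B) (hAC : Disjoint A C) (hBC : Disjoint B C)
    (hcover : A ∪ B ∪ C = Finset.univ)
    (Sig : Matrix (Fin m) (Fin m) ℝ) (hSig : Sig.PosDef)
    (hzero : ∀ a ∈ A, ∀ b ∈ B, Sig⁻¹ a b = 0) :
    ∀ i j : {x : Fin m // x ∈ A ∪ C},
      ((i : Fin m) ∈ A ∨ (j : Fin m) ∈ A) →
      (Sig.submatrix (Subtype.val : {x : Fin m // x ∈ A ∪ C} → Fin m)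
          Subtype.val)⁻¹ i j
        = Sig⁻¹ (i : Fin m) (j : Fin m) :=
  submatrix_inverse_agrees_on_separated_block_general m A B C hcover Sig hSig hzero
end
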